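/- Let B ∈ (ℝ ∪ {−∞})^{n×n} satisfy Tr(B) ≤ 𝟙, let p ∈ (ℝ ∪ {−∞})ⁿ be a nonzero vector, and let q ∈ ℝⁿ be a regular vector. Set θ = (q⁻ B* p)^{1/2}. Then the minimum of x⁻ p ⊕ q⁻ x over all regular vectors x ∈ ℝⁿ satisfying B x ≤ x equals θ, and a regular vector x with B x ≤ x attains this minimum if and only if x = B* u for some vector u with θ⁻¹ p ≤ u ≤ θ (q⁻ B*)⁻, where θ⁻¹ = −θ. -/

import Mathlib

open Finset

noncomputable section

namespace MaxPlus

/-- Max-plus multiplicative inverse: `-a` for real `a`, `⊥` for `⊥`. -/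
def tinv (a : WithBot ℝ) : WithBot ℝ := WithBot.map (fun r => -r) a

/-- Max-plus rational power `a^(1/k) = a / k`. -/
def trt (a : WithBot ℝ) (k : ℕ) : WithBot ℝ := WithBot.map (fun r => r / (k : ℝ)) a

/-- A vector is regular if it has no `⊥` (= -∞) entries. -/
def Reg {n : ℕ} (x : Fin n → WithBot ℝ) : Prop := ∀ i, x i ≠ ⊥

/-- `cdot q x = q⁻ x`, the max-plus product of the conjugate row vector `q⁻` with `x`. -/
def cdot {n : ℕ} (q x : Fin n → WithBot ℝ) : WithBot ℝ :=
  Finset.univ.sup fun i => tinv (q i) + x i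

/-- Max-plus matrix-vector product. -/
def mulVec {m n : ℕ} (A : Matrix (Fin m) (Fin n) (WithBot ℝ)) (x : Fin n → WithBot ℝ) :
    Fin m → WithBot ℝ := fun i => Finset.univ.sup fun j => A i j + x j

/-- Max-plus matrix product. -/
def tmul {l m n : ℕ} (A : Matrix (Fin l) (Fin m) (WithBot ℝ))
    (B : Matrix (Fin m) (Fin n) (WithBot ℝ)) : Matrix (Fin l) (Fin n) (WithBot ℝ) :=
  fun i j => Finset.univ.sup fun k => A i k + B k j

/-- Multiplicative conjugate transpose of a matrix. -/
def conjM {m n : ℕ} (A : Matrix (Fin m) (Fin n) (WithBot ℝ)) :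
    Matrix (Fin n) (Fin m) (WithBot ℝ) := fun i j => tinv (A j i)

/-- Max-plus identity matrix. -/
def tId {n : ℕ} : Matrix (Fin n) (Fin n) (WithBot ℝ) := fun i j => if i = j then 0 else ⊥

/-- Max-plus matrix power. -/
def tpow {n : ℕ} (A : Matrix (Fin n) (Fin n) (WithBot ℝ)) : ℕ → Matrix (Fin n) (Fin n) (WithBot ℝ)
  | 0 => tId
  | k + 1 => tmul A (tpow A k)

/-- Max-plus trace. -/
def ttr {n : ℕ} (A : Matrix (Fin n) (Fin n) (WithBot ℝ)) : WithBot ℝ :=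
  Finset.univ.sup fun i => A i i

/-- `Tr(A) = tr A ⊕ tr A² ⊕ ⋯ ⊕ tr Aⁿ`. -/
def TrOp {n : ℕ} (A : Matrix (Fin n) (Fin n) (WithBot ℝ)) : WithBot ℝ :=
  (Finset.Icc 1 n).sup fun m => ttr (tpow A m)

/-- Kleene star `A* = I ⊕ A ⊕ ⋯ ⊕ A^(n-1)`. -/
def kstar {n : ℕ} (A : Matrix (Fin n) (Fin n) (WithBot ℝ)) : Matrix (Fin n) (Fin n) (WithBot ℝ) :=
  fun i j => (Finset.range n).sup fun k => tpow A k i j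

/-- Max-plus spectral radius `λ = ⊕_{m=1}^n (tr A^m)^(1/m)`. -/
def specRad {n : ℕ} (A : Matrix (Fin n) (Fin n) (WithBot ℝ)) : WithBot ℝ :=
  (Finset.Icc 1 n).sup fun m => trt (ttr (tpow A m)) m

/-- `prodAB A B [i₁, …, i_k] = A B^{i₁} A B^{i₂} ⋯ A B^{i_k}`. -/
def prodAB {n : ℕ} (A B : Matrix (Fin n) (Fin n) (WithBot ℝ)) :
    List ℕ → Matrix (Fin n) (Fin n) (WithBot ℝ)
  | [] => tId
  | i :: t => tmul (tmul A (tpow B i)) (prodAB A B t)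

/-- The all-ones (all-`𝟙 = 0`) vector. -/
def onesV (n : ℕ) : Fin n → WithBot ℝ := fun _ => 0

end MaxPlus

open MaxPlus

/-!
For `x` with `B x ≤ x` one has `x = B* x`, and `p ≤ (x⁻ p) x`; hence
`θ² = q⁻ B* p ≤ (q⁻ x)(x⁻ p) ≤ (x⁻ p ⊕ q⁻ x)²`, so `θ` is a lower bound. For such `x` the
inequalities `x⁻ p ≤ θ` and `q⁻ x = (q⁻ B*) x ≤ θ` say exactly that `θ⁻¹ p ≤ x ≤ θ (q⁻ B*)⁻`.
Conversely every `x = B* u` is feasible, because `Tr(B) ≤ 𝟙` bounds every power of `B`, hence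
`B B*`, by `B*`. Taking `u = θ (q⁻ B*)⁻`, which lies in the box since `(q⁻ B*) p = θ²`, shows that
the bound is attained.
-/

namespace MaxPlus

section Scalar

lemma add_finset_sup {ι : Type*} (s : Finset ι) (f : ι → WithBot ℝ) (a : WithBot ℝ) :
    a + s.sup f = s.sup fun i => a + f i :=
  Finset.apply_sup_eq_sup_comp (a + ·) (fun x y => (max_add_add_left a x y).symm)
    (WithBot.add_bot a)

lemma finset_sup_add {ι : Type*} (s : Finset ι) (f : ι → WithBot ℝ) (a : WithBot ℝ) :
    s.sup f + a = s.sup fun i => f i + a := by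
  simp only [add_comm _ a, add_finset_sup]

lemma tinv_ne_bot {a : WithBot ℝ} (ha : a ≠ ⊥) : tinv a ≠ ⊥ :=
  mt WithBot.map_eq_bot_iff.1 ha

lemma tinv_tinv (a : WithBot ℝ) : tinv (tinv a) = a := by
  cases a <;> simp [tinv]

lemma tinv_add_le_iff {a b c : WithBot ℝ} (hc : c ≠ ⊥) : tinv c + a ≤ b ↔ a ≤ c + b := by
  lift c to ℝ using hc
  induction a <;> induction b <;> simp [tinv, ← WithBot.coe_add]

lemma add_le_iff_le_tinv_add {a b c : WithBot ℝ} (hc : c ≠ ⊥) : c + a ≤ b ↔ a ≤ tinv c + b := by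
  simpa only [tinv_tinv] using tinv_add_le_iff (tinv_ne_bot hc)

lemma trt_two_add_self (a : WithBot ℝ) : trt a 2 + trt a 2 = a := by
  induction a with
  | bot => rfl
  | coe a => simp [trt, ← WithBot.coe_add]

lemma le_of_add_self_le_add_self {a b : WithBot ℝ} (h : a + a ≤ b + b) : a ≤ b := by
  induction b with
  | bot => simpa using h
  | coe b =>
    induction a with
    | bot => exact bot_le
    | coe a =>
      norm_cast at h ⊢
      linarith

end Scalar

section Walks

variable {n : ℕ} (B : Matrix (Fin n) (Fin n) (WithBot ℝ))

def walkWeight (g : ℕ → Fin n) (k : ℕ) : WithBot ℝ :=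
  ∑ i ∈ range k, B (g i) (g (i + 1))

lemma walkWeight_succ (g : ℕ → Fin n) (k : ℕ) :
    walkWeight B g (k + 1) = B (g 0) (g 1) + walkWeight B (fun m => g (m + 1)) k := by
  rw [walkWeight, sum_range_succ', add_comm]
  rfl

lemma walkWeight_add (g : ℕ → Fin n) (a b : ℕ) :
    walkWeight B g (a + b) = walkWeight B g a + walkWeight B (fun m => g (a + m)) b :=
  sum_range_add _ a b

lemma walkWeight_le_tpow (k : ℕ) (g : ℕ → Fin n) :
    walkWeight B g k ≤ tpow B k (g 0) (g k) := by
  induction k generalizing g with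
  | zero => simp [walkWeight, tpow, tId]
  | succ k ih =>
    rw [walkWeight_succ]
    exact (add_le_add_right (ih _) _).trans
      (le_sup (f := fun m => B (g 0) m + tpow B k m (g (k + 1))) (mem_univ (g 1)))

lemma exists_walkWeight_eq_tpow {k : ℕ} {u v : Fin n} (h : tpow B k u v ≠ ⊥) :
    ∃ g : ℕ → Fin n, g 0 = u ∧ g k = v ∧ walkWeight B g k = tpow B k u v := by
  induction k generalizing u with
  | zero =>
    have huv : u = v := by by_contra huv; simp [tpow, tId, huv] at h
    subst huv
    exact ⟨fun _ => u, rfl, rfl, by simp [walkWeight, tpow, tId]⟩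
  | succ k ih =>
    obtain ⟨w, -, hw⟩ := exists_mem_eq_sup univ ⟨u, mem_univ u⟩
      fun m => B u m + tpow B k m v
    change tmul B (tpow B k) u v ≠ ⊥ at h
    rw [tmul, hw] at h
    obtain ⟨g, rfl, hgk, hg⟩ := ih (WithBot.add_ne_bot.1 h).2
    refine ⟨fun m => Nat.casesOn m u g, rfl, hgk, ?_⟩
    rw [walkWeight_succ]
    exact (congrArg _ hg).trans hw.symm

lemma tpow_add_le (a b : ℕ) (u w v : Fin n) :
    tpow B a u w + tpow B b w v ≤ tpow B (a + b) u v := by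
  induction a generalizing u with
  | zero => by_cases huw : u = w <;> simp [tpow, tId, huw]
  | succ a ih =>
    rw [Nat.add_right_comm]
    change tmul B (tpow B a) u w + _ ≤ tmul B (tpow B (a + b)) u v
    rw [tmul, finset_sup_add]
    refine Finset.sup_le fun m _ => ?_
    rw [add_assoc]
    exact (add_le_add_right (ih m) _).trans
      (le_sup (f := fun m => B u m + tpow B (a + b) m v) (mem_univ m))

lemma exists_lt_le_apply_eq (g : ℕ → Fin n) : ∃ i j, i < j ∧ j ≤ n ∧ g i = g j := by
  obtain ⟨a, b, hab, h⟩ := Fintype.exists_ne_map_eq_of_card_lt (fun i : Fin (n + 1) => g i)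
    (by simp)
  rcases lt_or_gt_of_ne (Fin.val_ne_of_ne hab) with hlt | hlt
  · exact ⟨a, b, hlt, Nat.lt_succ_iff.1 b.isLt, h⟩
  · exact ⟨b, a, hlt, Nat.lt_succ_iff.1 a.isLt, h.symm⟩

end Walks

section KleeneStar

variable {n : ℕ} (B : Matrix (Fin n) (Fin n) (WithBot ℝ))

lemma tpow_le_kstar_of_lt {k : ℕ} (hk : k < n) (u v : Fin n) : tpow B k u v ≤ kstar B u v :=
  le_sup (f := fun m => tpow B m u v) (mem_range.2 hk)

lemma kstar_diag_nonneg (u : Fin n) : 0 ≤ kstar B u u := by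
  simpa [tpow, tId] using tpow_le_kstar_of_lt B u.pos u u

lemma tpow_diag_nonpos (hB : TrOp B ≤ 0) {k : ℕ} (hk₀ : 1 ≤ k) (hkn : k ≤ n) (u : Fin n) :
    tpow B k u u ≤ 0 :=
  calc tpow B k u u ≤ ttr (tpow B k) := le_sup (f := fun i => tpow B k i i) (mem_univ u)
    _ ≤ TrOp B := le_sup (f := fun m => ttr (tpow B m)) (mem_Icc.2 ⟨hk₀, hkn⟩)
    _ ≤ 0 := hB

/-- A walk of length `k ≥ n` repeats a vertex; the cycle between the repetitions has
nonpositive weight, and removing it leaves a shorter walk with the same end points. -/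
lemma tpow_le_kstar (hB : TrOp B ≤ 0) (k : ℕ) (u v : Fin n) : tpow B k u v ≤ kstar B u v := by
  induction k using Nat.strong_induction_on generalizing u v with
  | _ k ih =>
  by_cases hk : k < n
  · exact tpow_le_kstar_of_lt B hk u v
  by_cases hbot : tpow B k u v = ⊥
  · simp [hbot]
  obtain ⟨g, rfl, rfl, hg⟩ := exists_walkWeight_eq_tpow B hbot
  obtain ⟨i, j, hij, hjn, hgij⟩ := exists_lt_le_apply_eq g
  obtain ⟨d, rfl⟩ : ∃ d, j = i + d := ⟨j - i, by omega⟩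
  obtain ⟨e, he⟩ : ∃ e, k = i + d + e := ⟨k - (i + d), by omega⟩
  have hcycle : walkWeight B (fun m => g (i + m)) d ≤ 0 :=
    (walkWeight_le_tpow B d _).trans (hgij ▸ tpow_diag_nonpos B hB (by omega) (by omega) _)
  rw [← hg, he, walkWeight_add, walkWeight_add]
  calc walkWeight B g i + walkWeight B (fun m => g (i + m)) d
        + walkWeight B (fun m => g (i + d + m)) e
      ≤ walkWeight B g i + 0 + walkWeight B (fun m => g (i + d + m)) e := by gcongr
    _ ≤ tpow B i (g 0) (g i) + tpow B e (g (i + d)) (g (i + d + e)) := by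
        rw [add_zero]
        exact add_le_add (walkWeight_le_tpow B i g) (walkWeight_le_tpow B e _)
    _ ≤ tpow B (i + e) (g 0) (g (i + d + e)) := hgij ▸ tpow_add_le B i e _ _ _
    _ ≤ kstar B (g 0) (g (i + d + e)) := ih _ (by omega) _ _

lemma tmul_kstar_le (hB : TrOp B ≤ 0) (i j : Fin n) : tmul B (kstar B) i j ≤ kstar B i j := by
  refine Finset.sup_le fun k _ => ?_
  rw [kstar, add_finset_sup]
  exact Finset.sup_le fun m _ =>
    (le_sup (f := fun k => B i k + tpow B m k j) (mem_univ k)).trans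
      (tpow_le_kstar B hB (m + 1) i j)

end KleeneStar

section Vectors

variable {l m n : ℕ}

/-- The row vector `q⁻ A`. -/
def conjVecMul (q : Fin m → WithBot ℝ) (A : Matrix (Fin m) (Fin n) (WithBot ℝ)) :
    Fin n → WithBot ℝ :=
  fun j => univ.sup fun i => tinv (q i) + A i j

lemma mulVec_mono (A : Matrix (Fin m) (Fin n) (WithBot ℝ)) {x y : Fin n → WithBot ℝ}
    (h : x ≤ y) : mulVec A x ≤ mulVec A y := fun i =>
  Finset.sup_le fun j _ => (add_le_add_right (h j) _).trans
    (le_sup (f := fun j => A i j + y j) (mem_univ j))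

lemma cdot_mono (q : Fin n → WithBot ℝ) {x y : Fin n → WithBot ℝ} (h : x ≤ y) :
    cdot q x ≤ cdot q y :=
  Finset.sup_le fun j _ => (add_le_add_right (h j) _).trans
    (le_sup (f := fun j => tinv (q j) + y j) (mem_univ j))

lemma mulVec_tmul (A : Matrix (Fin l) (Fin m) (WithBot ℝ)) (C : Matrix (Fin m) (Fin n) (WithBot ℝ))
    (x : Fin n → WithBot ℝ) : mulVec (tmul A C) x = mulVec A (mulVec C x) := by
  ext1 i
  simp only [mulVec, tmul, finset_sup_add, add_finset_sup, add_assoc]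
  exact Finset.sup_comm _ _ _

lemma cdot_mulVec (q : Fin m → WithBot ℝ) (A : Matrix (Fin m) (Fin n) (WithBot ℝ))
    (x : Fin n → WithBot ℝ) : cdot q (mulVec A x) = univ.sup fun j => conjVecMul q A j + x j := by
  simp only [cdot, mulVec, conjVecMul, finset_sup_add, add_finset_sup, add_assoc]
  exact Finset.sup_comm _ _ _

lemma mulVec_add_const (A : Matrix (Fin m) (Fin n) (WithBot ℝ)) (x : Fin n → WithBot ℝ)
    (c : WithBot ℝ) : mulVec A (fun j => x j + c) = fun i => mulVec A x i + c := by
  ext1 i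
  simp only [mulVec, finset_sup_add, add_assoc]

lemma cdot_add_const (q x : Fin n → WithBot ℝ) (c : WithBot ℝ) :
    cdot q (fun j => x j + c) = cdot q x + c := by
  simp only [cdot, finset_sup_add, add_assoc]

lemma le_add_cdot {x : Fin n → WithBot ℝ} (p : Fin n → WithBot ℝ) {j : Fin n} (hx : x j ≠ ⊥) :
    p j ≤ x j + cdot x p :=
  (tinv_add_le_iff hx).1 (le_sup (f := fun i => tinv (x i) + p i) (mem_univ j))

lemma cdot_le_iff {x : Fin n → WithBot ℝ} (hx : Reg x) (p : Fin n → WithBot ℝ) {θ : WithBot ℝ}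
    (hθ : θ ≠ ⊥) : cdot x p ≤ θ ↔ ∀ j, tinv θ + p j ≤ x j := by
  simp only [cdot, Finset.sup_le_iff, mem_univ, true_implies, tinv_add_le_iff (hx _),
    tinv_add_le_iff hθ, add_comm θ]

lemma cdot_mulVec_le_iff {q : Fin m → WithBot ℝ} {A : Matrix (Fin m) (Fin n) (WithBot ℝ)}
    (hqA : Reg (conjVecMul q A)) (u : Fin n → WithBot ℝ) (θ : WithBot ℝ) :
    cdot q (mulVec A u) ≤ θ ↔ ∀ j, u j ≤ θ + tinv (conjVecMul q A j) := by
  simp only [cdot_mulVec, Finset.sup_le_iff, mem_univ, true_implies,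
    add_le_iff_le_tinv_add (hqA _), add_comm θ]

end Vectors

section KleeneStarVectors

variable {n : ℕ} (B : Matrix (Fin n) (Fin n) (WithBot ℝ))

lemma le_mulVec_kstar (x : Fin n → WithBot ℝ) : x ≤ mulVec (kstar B) x := fun j =>
  calc x j ≤ kstar B j j + x j := le_add_of_nonneg_left (kstar_diag_nonneg B j)
    _ ≤ mulVec (kstar B) x j := le_sup (f := fun k => kstar B j k + x k) (mem_univ j)

lemma mulVec_tpow_le {x : Fin n → WithBot ℝ} (hx : mulVec B x ≤ x) (k : ℕ) :
    mulVec (tpow B k) x ≤ x := by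
  induction k with
  | zero =>
    intro i
    refine Finset.sup_le fun j _ => ?_
    by_cases hij : i = j <;> simp [tpow, tId, hij]
  | succ k ih =>
    change mulVec (tmul B (tpow B k)) x ≤ x
    rw [mulVec_tmul]
    exact (mulVec_mono B ih).trans hx

lemma mulVec_kstar_le {x : Fin n → WithBot ℝ} (hx : mulVec B x ≤ x) :
    mulVec (kstar B) x ≤ x := fun i => by
  refine Finset.sup_le fun j _ => ?_
  rw [kstar, finset_sup_add]
  exact Finset.sup_le fun k _ =>
    (le_sup (f := fun j => tpow B k i j + x j) (mem_univ j)).trans (mulVec_tpow_le B hx k i)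

lemma mulVec_kstar_eq_self {x : Fin n → WithBot ℝ} (hx : mulVec B x ≤ x) :
    mulVec (kstar B) x = x :=
  le_antisymm (mulVec_kstar_le B hx) (le_mulVec_kstar B x)

lemma mulVec_mulVec_kstar_le (hB : TrOp B ≤ 0) (u : Fin n → WithBot ℝ) :
    mulVec B (mulVec (kstar B) u) ≤ mulVec (kstar B) u := fun i => by
  rw [← mulVec_tmul]
  exact Finset.sup_le fun j _ => (add_le_add_left (tmul_kstar_le B hB i j) _).trans
    (le_sup (f := fun j => kstar B i j + u j) (mem_univ j))

lemma reg_conjVecMul_kstar {q : Fin n → WithBot ℝ} (hq : Reg q) : Reg (conjVecMul q (kstar B)) :=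
  fun j => ne_bot_of_le_ne_bot (tinv_ne_bot (hq j)) <|
    (le_add_of_nonneg_right (kstar_diag_nonneg B j)).trans
      (le_sup (f := fun i => tinv (q i) + kstar B i j) (mem_univ j))

end KleeneStarVectors

section Optimization

variable {n : ℕ} (B : Matrix (Fin n) (Fin n) (WithBot ℝ)) {p q x : Fin n → WithBot ℝ}

lemma cdot_mulVec_kstar_le_add (hx : Reg x) (hBx : mulVec B x ≤ x) :
    cdot q (mulVec (kstar B) p) ≤ cdot q x + cdot x p :=
  calc cdot q (mulVec (kstar B) p)
      ≤ cdot q (mulVec (kstar B) fun j => x j + cdot x p) :=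
        cdot_mono q (mulVec_mono _ fun j => le_add_cdot p (hx j))
    _ = cdot q (mulVec (kstar B) x) + cdot x p := by rw [mulVec_add_const, cdot_add_const]
    _ ≤ cdot q x + cdot x p := by gcongr; exact cdot_mono q (mulVec_kstar_le B hBx)

lemma cdot_sup_cdot_le_iff (hq : Reg q) {θ : WithBot ℝ} (hθ : θ ≠ ⊥) (hx : Reg x)
    (hBx : mulVec B x ≤ x) :
    cdot x p ⊔ cdot q x ≤ θ ↔ ∃ u : Fin n → WithBot ℝ, x = mulVec (kstar B) u ∧
      ∀ j, tinv θ + p j ≤ u j ∧ u j ≤ θ + tinv (conjVecMul q (kstar B) j) := by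
  have hr := reg_conjVecMul_kstar B hq
  constructor
  · intro h
    obtain ⟨hxp, hqx⟩ := sup_le_iff.1 h
    rw [← mulVec_kstar_eq_self B hBx, cdot_mulVec_le_iff hr] at hqx
    exact ⟨x, (mulVec_kstar_eq_self B hBx).symm,
      fun j => ⟨(cdot_le_iff hx p hθ).1 hxp j, hqx j⟩⟩
  · rintro ⟨u, rfl, hu⟩
    exact sup_le ((cdot_le_iff hx p hθ).2 fun j => (hu j).1.trans (le_mulVec_kstar B u j))
      ((cdot_mulVec_le_iff hr u θ).2 fun j => (hu j).2)

end Optimization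

end MaxPlus

/-- minimization of `x⁻ p ⊕ q⁻ x` subject to `B x ≤ x`. -/
theorem stmt_3 {n : ℕ} (B : Matrix (Fin n) (Fin n) (WithBot ℝ)) (hB : TrOp B ≤ 0)
    (p : Fin n → WithBot ℝ) (hp : ∃ i, p i ≠ ⊥)
    (q : Fin n → WithBot ℝ) (hq : Reg q)
    (θ : WithBot ℝ) (hθ : θ = trt (cdot q (mulVec (kstar B) p)) 2) :
    IsLeast {v | ∃ x : Fin n → WithBot ℝ, Reg x ∧ (∀ i, mulVec B x i ≤ x i) ∧
        cdot x p ⊔ cdot q x = v} θ ∧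
      ∀ x : Fin n → WithBot ℝ, Reg x → (∀ i, mulVec B x i ≤ x i) →
        (cdot x p ⊔ cdot q x = θ ↔
          ∃ u : Fin n → WithBot ℝ, x = mulVec (kstar B) u ∧
            ∀ j, tinv θ + p j ≤ u j ∧
              u j ≤ θ + tinv (Finset.univ.sup fun i => tinv (q i) + kstar B i j)) := by
  obtain ⟨i₀, hp₀⟩ := hp
  have hr := reg_conjVecMul_kstar B hq
  have hθθ : θ + θ = cdot q (mulVec (kstar B) p) := hθ ▸ trt_two_add_self _
  have hrp (j : Fin n) : conjVecMul q (kstar B) j + p j ≤ θ + θ := by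
    rw [hθθ, cdot_mulVec]
    exact le_sup (f := fun j => conjVecMul q (kstar B) j + p j) (mem_univ j)
  have hθ_ne : θ ≠ ⊥ := fun h => WithBot.add_ne_bot.2 ⟨hr i₀, hp₀⟩ (by simpa [h] using hrp i₀)
  have lower (x) (hx : Reg x) (hBx : mulVec B x ≤ x) : θ ≤ cdot x p ⊔ cdot q x :=
    le_of_add_self_le_add_self <| hθθ ▸ (cdot_mulVec_kstar_le_add B hx hBx).trans
      (add_le_add le_sup_right le_sup_left)
  have optimal (x) (hx : Reg x) (hBx : mulVec B x ≤ x) := (le_antisymm_iff.trans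
    (and_iff_left (lower x hx hBx))).trans (cdot_sup_cdot_le_iff B hq hθ_ne hx hBx)
  set u₀ : Fin n → WithBot ℝ := fun j => θ + tinv (conjVecMul q (kstar B) j)
  have hu₀ (j : Fin n) : tinv θ + p j ≤ u₀ j := by
    refine (tinv_add_le_iff hθ_ne).2 ?_
    rw [← add_assoc, add_comm _ (tinv _)]
    exact (add_le_iff_le_tinv_add (hr j)).1 (hrp j)
  have hx₀ : Reg (mulVec (kstar B) u₀) := fun j => ne_bot_of_le_ne_bot
    (WithBot.add_ne_bot.2 ⟨hθ_ne, tinv_ne_bot (hr j)⟩) (le_mulVec_kstar B u₀ j)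
  have hBx₀ := mulVec_mulVec_kstar_le B hB u₀
  refine ⟨⟨⟨_, hx₀, hBx₀, (optimal _ hx₀ hBx₀).2 ⟨u₀, rfl, fun j => ⟨hu₀ j, le_rfl⟩⟩⟩, ?_⟩, optimal⟩
  rintro v ⟨x, hx, hBx, rfl⟩
  exact lower x hx hBx
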